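/- Fix an integer N ≥ 1 and real numbers μ_i[0] > 0 for 0 ≤ i ≤ N−1, and let the sequences μ_i : ℕ → (0,∞) be determined by the recursion μ_i[n+1] = μ_i[n]·exp( 2·Σ_{j=0}^{i−1} μ_j[n+1] ). Then for every c > 0 and every integer n₊ ≥ 1: Σ_{j=0}^{N−1} μ_j[0] ≤ c/2 + max_{0≤j≤N−1} μ_j[n₊] + e^{−c·n₊}·Σ_{j=0}^{N−1} μ_j[n₊]. -/

import Mathlib

/-!
Split the beams at the first index `i₀` where the prefix sums of `μ_·[0]` exceed `c/2`. The beams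
before `i₀` carry at most `c/2` in total, and `μ_{i₀}[0] ≤ μ_{i₀}[n₊]` because every `μ_i` is
nondecreasing in time. For every later beam `j` the prefix sum `Σ_{k<j} μ_k` exceeds `c/2` at time
`0`, hence at all times, so each step of the recursion multiplies `μ_j` by at least `e^c`, and
`μ_j[0] ≤ e^{-c n₊} μ_j[n₊]`.
-/

/-- The recursive system modelling the energy exchange between `N` spherically symmetric
Vlasov beams: `μ_i[n+1] = μ_i[n]·exp(2·Σ_{j=0}^{i−1} μ_j[n+1])` for `0 ≤ i ≤ N−1`
(the empty sum being `0` for `i = 0`). -/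
def MuRec (N : ℕ) (μ : ℕ → ℕ → ℝ) : Prop :=
  ∀ i < N, ∀ n : ℕ,
    μ i (n + 1) = μ i n * Real.exp (2 * ∑ j ∈ Finset.range i, μ j (n + 1))

open Finset Real

theorem sum_range_le_add_add_sum_filter_lt {a : ℕ → ℝ} {N : ℕ} {t M : ℝ}
    (ha : ∀ j < N, 0 ≤ a j) (hM : ∀ j < N, a j ≤ M) (htM : 0 ≤ t + M) :
    ∑ j ∈ range N, a j ≤ t + M + ∑ j ∈ range N with t < ∑ k ∈ range j, a k, a j := by
  induction N with
  | zero => simpa using htM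
  | succ N ih =>
    have ih := ih (fun j hj => ha j (by omega)) (fun j hj => hM j (by omega))
    rw [sum_filter, sum_range_succ, sum_range_succ, ← sum_filter]
    split_ifs with hN
    · linarith
    · have hfilter : 0 ≤ ∑ j ∈ range N with t < ∑ k ∈ range j, a k, a j :=
        sum_nonneg fun j hj => ha j (by simp at hj; omega)
      linarith [hM N N.lt_add_one]

namespace MuRec

variable {N : ℕ} {μ : ℕ → ℕ → ℝ}

theorem monotone (hrec : MuRec N μ) (hμ : ∀ i < N, ∀ n, 0 ≤ μ i n) {i : ℕ} (hi : i < N) :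
    Monotone (μ i) := by
  refine monotone_nat_of_le_succ fun n => ?_
  have hsum : 0 ≤ ∑ j ∈ range i, μ j (n + 1) :=
    sum_nonneg fun j hj => hμ j ((mem_range.mp hj).trans hi) (n + 1)
  rw [hrec i hi n]
  exact le_mul_of_one_le_right (hμ i hi n) (one_le_exp (by linarith))

theorem le_exp_neg_mul_mul (hrec : MuRec N μ) (hμ : ∀ i < N, ∀ n, 0 ≤ μ i n) {i : ℕ}
    (hi : i < N) {c : ℝ} (hc : c ≤ 2 * ∑ j ∈ range i, μ j 0) (n : ℕ) :
    μ i 0 ≤ exp (-(c * n)) * μ i n := by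
  have hgrowth : exp c ^ n * μ i 0 ≤ μ i n := by
    refine geom_le (exp_pos c).le n fun k _ => ?_
    have hprefix : ∑ j ∈ range i, μ j 0 ≤ ∑ j ∈ range i, μ j (k + 1) :=
      sum_le_sum fun j hj =>
        hrec.monotone hμ ((mem_range.mp hj).trans hi) (Nat.zero_le (k + 1))
    rw [hrec i hi k, mul_comm]
    exact mul_le_mul_of_nonneg_left (exp_le_exp.mpr (by linarith)) (hμ i hi k)
  rw [exp_neg, mul_comm c, exp_nat_mul, inv_mul_eq_div, le_div_iff₀ (by positivity), mul_comm]
  exact hgrowth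

end MuRec

theorem mu_system_initial_data_smallness_general (N : ℕ) (hN : 1 ≤ N) (μ : ℕ → ℕ → ℝ)
    (hpos : ∀ i < N, ∀ n : ℕ, 0 < μ i n) (hrec : MuRec N μ)
    (c : ℝ) (hc : 0 < c) (nplus : ℕ) :
    ∑ j ∈ Finset.range N, μ j 0 ≤
      c / 2 +
        (Finset.range N).sup'
          (Finset.nonempty_range_iff.mpr (Nat.one_le_iff_ne_zero.mp hN))
          (fun j => μ j nplus) +
        Real.exp (-(c * nplus)) * ∑ j ∈ Finset.range N, μ j nplus := by
  set M := (range N).sup' (nonempty_range_iff.mpr (Nat.one_le_iff_ne_zero.mp hN))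
    (fun j => μ j nplus)
  have hμ : ∀ i < N, ∀ n, 0 ≤ μ i n := fun i hi n => (hpos i hi n).le
  have hM : ∀ j < N, μ j 0 ≤ M := fun j hj =>
    (hrec.monotone hμ hj (Nat.zero_le nplus)).trans
      (le_sup' (fun j => μ j nplus) (mem_range.mpr hj))
  have hM₀ : 0 ≤ M := (hμ 0 hN 0).trans (hM 0 hN)
  calc ∑ j ∈ range N, μ j 0
      ≤ c / 2 + M + ∑ j ∈ range N with c / 2 < ∑ k ∈ range j, μ k 0, μ j 0 :=
        sum_range_le_add_add_sum_filter_lt (fun j hj => hμ j hj 0) hM (by linarith)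
    _ ≤ c / 2 + M + ∑ j ∈ range N with c / 2 < ∑ k ∈ range j, μ k 0,
          exp (-(c * nplus)) * μ j nplus := by
        gcongr with j hj
        rw [mem_filter, mem_range] at hj
        exact hrec.le_exp_neg_mul_mul hμ hj.1 (by linarith [hj.2]) nplus
    _ ≤ c / 2 + M + exp (-(c * nplus)) * ∑ j ∈ range N, μ j nplus := by
        rw [← mul_sum]
        gcongr
        · exact fun j hj _ => hμ j (mem_range.mp hj) nplus
        · exact filter_subset _ _

/-- **Smallness of the initial data in terms of the final profile.** For every `c > 0`
and `n₊ ≥ 1`, `Σ_j μ_j[0] ≤ c/2 + max_j μ_j[n₊] + e^{−c·n₊}·Σ_j μ_j[n₊]`. -/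
theorem mu_system_initial_data_smallness (N : ℕ) (hN : 1 ≤ N) (μ : ℕ → ℕ → ℝ)
    (hpos : ∀ i < N, ∀ n : ℕ, 0 < μ i n) (hrec : MuRec N μ)
    (c : ℝ) (hc : 0 < c) (nplus : ℕ) (hnp : 1 ≤ nplus) :
    ∑ j ∈ Finset.range N, μ j 0 ≤
      c / 2 +
        (Finset.range N).sup'
          (Finset.nonempty_range_iff.mpr (Nat.one_le_iff_ne_zero.mp hN))
          (fun j => μ j nplus) +
        Real.exp (-(c * nplus)) * ∑ j ∈ Finset.range N, μ j nplus :=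
  mu_system_initial_data_smallness_general N hN μ hpos hrec c hc nplus
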